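/- arXiv:1209.4287 — 8 statements merged into one kernel-verified Lean document; each statement's English description precedes it below -/
import Mathlib

section
/- Let S = {x_1, ..., x_n} be a finite meet-closed subset of a lattice P, ordered so that x_i ≼ x_j implies i ≤ j, and let f : P → ℝ. Define Ψ on S by Ψ(x_k) = Σ_{x_v ≼ x_k} f(x_v) μ_S(x_v, x_k), where μ_S is the Möbius function of the poset (S, ≼). Then det((f(x_i ∧ x_j))_{i,j=1}^n) = Ψ(x_1) Ψ(x_2) ⋯ Ψ(x_n). -/
open scoped Classical

/-! With `ζ` the zeta matrix of `S`, meet-closedness gives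
`f (x i ⊓ x j) = ∑_{x v ≤ x i, x v ≤ x j} Ψ v`, i.e. the meet matrix factors as
`ζ * diagonal Ψ * ζᵀ`. Since the enumeration is compatible with the order, `ζ` is
unitriangular, so the determinant is `∏ i, Ψ i`. -/

open Matrix

section ZetaMatrix

variable {P ι R : Type*} [Fintype ι] [DecidableEq ι]

noncomputable def zetaMatrix [LE P] [Zero R] [One R] (x : ι → P) : Matrix ι ι R :=
  of fun i v => if x v ≤ x i then 1 else 0

theorem zetaMatrix_mul_diagonal_mul_transpose_apply [SemilatticeInf P] [NonAssocSemiring R]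
    (x : ι → P) (Ψ : ι → R) (i j : ι) :
    (zetaMatrix x * diagonal Ψ * (zetaMatrix x)ᵀ : Matrix ι ι R) i j =
      ∑ v ∈ Finset.univ.filter fun v => x v ≤ x i ⊓ x j, Ψ v := by
  simp only [mul_apply, diagonal, transpose_apply, zetaMatrix, of_apply, Finset.sum_filter,
    le_inf_iff]
  refine Finset.sum_congr rfl fun v _ => ?_
  rw [Finset.sum_eq_single v (fun b _ hb => by simp [hb]) (by simp)]
  by_cases hi : x v ≤ x i <;> by_cases hj : x v ≤ x j <;> simp [hi, hj]

theorem meetMatrix_eq_zetaMatrix_mul_diagonal_mul_transpose [SemilatticeInf P]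
    [NonAssocSemiring R] (x : ι → P) (hmeet : ∀ i j, ∃ k, x k = x i ⊓ x j) (f : P → R)
    (Ψ : ι → R) (hΨ : ∀ k, f (x k) = ∑ v ∈ Finset.univ.filter fun v => x v ≤ x k, Ψ v) :
    of (fun i j => f (x i ⊓ x j)) = zetaMatrix x * diagonal Ψ * (zetaMatrix x)ᵀ := by
  ext i j
  obtain ⟨k, hk⟩ := hmeet i j
  rw [zetaMatrix_mul_diagonal_mul_transpose_apply, of_apply, ← hk, hΨ]

theorem det_zetaMatrix [LinearOrder ι] [Preorder P] [CommRing R] (x : ι → P)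
    (hord : ∀ i j, x i ≤ x j → i ≤ j) : (zetaMatrix x : Matrix ι ι R).det = 1 := by
  have hlower : (zetaMatrix x : Matrix ι ι R).IsLowerTriangular := fun i v hiv => by
    simp only [zetaMatrix, of_apply, ite_eq_right_iff]
    exact fun hle => absurd (hord v i hle) (not_le.mpr hiv)
  rw [det_of_isLowerTriangular _ hlower]
  exact Finset.prod_eq_one fun i _ => by simp [zetaMatrix]

end ZetaMatrix

/-- By Möbius inversion on `S`, `hΨ` is equivalent to the paper's definition
`Ψ (x k) = ∑_{x v ≼ x k} f (x v) μ_S (x v, x k)`. -/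
theorem meet_matrix_det_general {P : Type*} [Lattice P] {n : ℕ} (x : Fin n → P)
    (hord : ∀ i j, x i ≤ x j → i ≤ j)
    (hmeet : ∀ i j, ∃ k, x k = x i ⊓ x j)
    (f : P → ℝ) (Ψ : Fin n → ℝ)
    (hΨ : ∀ k, f (x k) = ∑ v ∈ Finset.univ.filter fun v => x v ≤ x k, Ψ v) :
    (Matrix.of fun i j => f (x i ⊓ x j)).det = ∏ i, Ψ i := by
  rw [meetMatrix_eq_zetaMatrix_mul_diagonal_mul_transpose x hmeet f Ψ hΨ, det_mul, det_mul,
    det_transpose, det_zetaMatrix x hord, det_diagonal, one_mul, mul_one]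

/-- **Determinant of a meet matrix on a meet-closed set.**
`x : Fin n → P` enumerates the meet-closed set `S` compatibly with the order,
and `Ψ` is the function determined by `f (x k) = ∑_{x v ≼ x k} Ψ v`
(equivalently `Ψ (x k) = ∑_{x v ≼ x k} f (x v) μ_S (x v, x k)`). Then
`det (f (x i ⊓ x j)) = ∏ i, Ψ i`. -/
theorem meet_matrix_det {P : Type*} [Lattice P] {n : ℕ} (x : Fin n → P)
    (hinj : Function.Injective x)
    (hord : ∀ i j, x i ≤ x j → i ≤ j)
    (hmeet : ∀ i j, ∃ k, x k = x i ⊓ x j)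
    (f : P → ℝ) (Ψ : Fin n → ℝ)
    (hΨ : ∀ k, f (x k) = ∑ v ∈ Finset.univ.filter fun v => x v ≤ x k, Ψ v) :
    (Matrix.of fun i j => f (x i ⊓ x j)).det = ∏ i, Ψ i :=
  meet_matrix_det_general x hord hmeet f Ψ hΨ
end

section
/- Let x_1 ≺ x_2 ≺ ⋯ ≺ x_n be a chain in a lattice P and f : P → ℝ. The n×n matrix with (i,j) entry f(x_{min(i,j)}) is positive definite if and only if 0 < f(x_1) < f(x_2) < ⋯ < f(x_n). -/
/-!
Put `g (-1) = 0` and let `d k = g k - g (k - 1)`. Since `∑_{k ≤ min i j} d k = g (min i j)`, the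
MIN matrix factors as `Z * diagonal d * Zᵀ`, where `Z i k = [k ≤ i]` is the zeta matrix of the
chain. `Z` is unitriangular, hence invertible, so the MIN matrix is positive definite iff
`diagonal d` is, i.e. iff every `d k` is positive, which is the chain `0 < g 0 < g 1 < ⋯`.
-/

open Finset
open scoped Matrix

namespace Matrix

variable (ι R : Type*) [LinearOrder ι]

def zeta [Zero R] [One R] : Matrix ι ι R := of fun i k => if k ≤ i then 1 else 0

theorem isUnit_zeta [Fintype ι] [CommRing R] : IsUnit (zeta ι R) := by
  rw [isUnit_iff_isUnit_det,
    det_of_isLowerTriangular (zeta ι R) fun i k hik => if_neg (not_le.2 hik)]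
  simp [zeta]

variable {ι R}

theorem zeta_mul_diagonal_mul_transpose [Fintype ι] [LocallyFiniteOrderBot ι] [DecidableEq ι]
    [CommSemiring R] (d : ι → R) :
    zeta ι R * diagonal d * (zeta ι R)ᵀ = of fun i j => ∑ k ∈ Iic (min i j), d k := by
  ext i j
  rw [mul_apply, of_apply, ← filter_ge_eq_Iic, sum_filter]
  refine sum_congr rfl fun k _ => ?_
  simp only [mul_diagonal, transpose_apply, zeta, of_apply, le_min_iff]
  split_ifs <;> simp_all

end Matrix

namespace Fin

variable {n : ℕ} {M : Type*}

/-- The successive differences `g k - g (k - 1)`, with the convention `g (-1) = 0`. -/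
def increments [AddGroup M] (g : Fin n → M) (k : Fin n) : M :=
  (cons 0 g : Fin (n + 1) → M) k.succ - (cons 0 g : Fin (n + 1) → M) k.castSucc

theorem sum_Iic_increments [AddCommGroup M] (g : Fin n → M) (m : Fin n) :
    ∑ k ∈ Iic m, increments g k = g m := by
  unfold increments
  rw [sum_Iic_sub]
  simp

theorem increments_pos_iff [AddGroup M] [PartialOrder M] [AddRightStrictMono M]
    (g : Fin n → M) : (∀ k, 0 < increments g k) ↔ (∀ i, 0 < g i) ∧ StrictMono g := by
  simp only [increments, sub_pos, ← strictMono_iff_lt_succ, strictMono_cons]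

end Fin

theorem Matrix.posDef_of_min_iff {n : ℕ} (g : Fin n → ℝ) :
    (of fun i j => g (min i j)).PosDef ↔ (∀ i, 0 < g i) ∧ StrictMono g := by
  have hfactor : of (fun i j => g (min i j)) =
      zeta (Fin n) ℝ * diagonal (Fin.increments g) * star (zeta (Fin n) ℝ) := by
    simp [star_eq_conjTranspose, zeta_mul_diagonal_mul_transpose, Fin.sum_Iic_increments]
  rw [hfactor, IsUnit.posDef_star_right_conjugate_iff (isUnit_zeta (Fin n) ℝ),
    posDef_diagonal_iff, Fin.increments_pos_iff]

theorem min_matrix_posDef_iff_general {P : Type*} {n : ℕ} (x : Fin n → P) (f : P → ℝ) :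
    (Matrix.of fun i j => f (x (min i j))).PosDef ↔
      (∀ i, 0 < f (x i)) ∧ StrictMono fun i => f (x i) :=
  Matrix.posDef_of_min_iff fun i => f (x i)

/-- **MIN matrix of a chain**: for a chain `x 0 ≺ x 1 ≺ ⋯` in a lattice `P`,
the matrix `(f (x (min i j)))` is positive definite iff
`0 < f (x 0) < f (x 1) < ⋯ < f (x (n-1))`. -/
theorem min_matrix_posDef_iff {P : Type*} [Lattice P] {n : ℕ} (x : Fin n → P)
    (hchain : StrictMono x) (f : P → ℝ) :
    (Matrix.of fun i j => f (x (min i j))).PosDef ↔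
      (∀ i, 0 < f (x i)) ∧ StrictMono fun i => f (x i) :=
  min_matrix_posDef_iff_general x f
end

section
/- Let x_1 ≺ x_2 ≺ ⋯ ≺ x_n be a chain in a lattice P and f : P → ℝ. The n×n matrix with (i,j) entry f(x_{max(i,j)}) is positive definite if and only if 0 < f(x_n) < f(x_{n-1}) < ⋯ < f(x_1). -/
/-!
Write `d k = g k - g (k + 1)` for the successive decrements of `g = f ∘ x` (with `g n = 0`),
and let `L` be the lower-triangular all-ones matrix. Telescoping gives
`g (max i j) = ∑_{k ≥ max i j} d k = (Lᵀ D L) i j` with `D = diagonal d`. Since `L` is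
unitriangular, hence invertible, the MAX matrix is positive definite iff `D` is, i.e. iff every
`d k` is positive, which says exactly that `g` is positive and strictly decreasing.
-/

open Finset Matrix

namespace MaxMatrix

def lowerOnes (ι : Type*) [LinearOrder ι] : Matrix ι ι ℝ :=
  of fun k j => if j ≤ k then 1 else 0

section LinearOrder

variable {ι : Type*} [Fintype ι] [LinearOrder ι]

theorem isUnit_lowerOnes : IsUnit (lowerOnes ι) := by
  classical
  have hlower : (lowerOnes ι).IsLowerTriangular := fun i j hij => by
    simp [lowerOnes, not_le.mpr (OrderDual.toDual_lt_toDual.mp hij)]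
  rw [isUnit_iff_isUnit_det, det_of_isLowerTriangular _ hlower]
  simp [lowerOnes]

theorem star_lowerOnes_mul_diagonal_mul_lowerOnes_apply [DecidableEq ι] (d : ι → ℝ)
    (i j : ι) :
    (star (lowerOnes ι) * diagonal d * lowerOnes ι) i j = ∑ k with max i j ≤ k, d k := by
  rw [mul_apply, sum_filter]
  refine sum_congr rfl fun k _ => ?_
  simp only [star_eq_conjTranspose, conjTranspose_eq_transpose_of_trivial, mul_diagonal,
    transpose_apply, lowerOnes, of_apply, max_le_iff]
  split_ifs <;> simp_all

end LinearOrder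

variable {n : ℕ}

def extendByZero (g : Fin n → ℝ) (k : ℕ) : ℝ :=
  if h : k < n then g ⟨k, h⟩ else 0

def decrement (g : Fin n → ℝ) (k : Fin n) : ℝ :=
  extendByZero g k - extendByZero g (k + 1)

theorem sum_Ici_decrement (g : Fin n → ℝ) (m : Fin n) : ∑ k ∈ Ici m, decrement g k = g m :=
  calc ∑ k ∈ Ici m, decrement g k
      = -∑ k ∈ Ico (m : ℕ) n, (extendByZero g (k + 1) - extendByZero g k) := by
        rw [← Fin.map_valEmbedding_Ici, sum_map, ← sum_neg_distrib]
        simp [decrement]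
    _ = g m := by
        rw [sum_Ico_sub _ m.is_lt.le]
        simp [extendByZero]

theorem forall_decrement_pos_iff (g : Fin n → ℝ) :
    (∀ k, 0 < decrement g k) ↔ (∀ i, 0 < g i) ∧ StrictAnti g := by
  constructor
  · intro hd
    refine ⟨fun i => ?_, fun i j hij => ?_⟩
    · rw [← sum_Ici_decrement g i]
      exact sum_pos (fun k _ => hd k) nonempty_Ici
    · rw [← sum_Ici_decrement g i, ← sum_Ici_decrement g j]
      exact sum_lt_sum_of_subset (Ici_subset_Ici.mpr hij.le) (mem_Ici.mpr le_rfl)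
        (by simpa using hij) (hd i) fun k _ _ => (hd k).le
  · rintro ⟨hpos, hanti⟩ k
    rw [decrement, sub_pos]
    by_cases hk : (k : ℕ) + 1 < n
    · have hlt : k < ⟨k + 1, hk⟩ := Fin.lt_def.mpr (Nat.lt_add_one _)
      simpa [extendByZero, hk] using hanti hlt
    · simpa [extendByZero, hk] using hpos k

theorem of_max_eq_star_lowerOnes_mul_diagonal_mul_lowerOnes (g : Fin n → ℝ) :
    of (fun i j => g (max i j))
      = star (lowerOnes (Fin n)) * diagonal (decrement g) * lowerOnes (Fin n) := by
  ext i j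
  rw [star_lowerOnes_mul_diagonal_mul_lowerOnes_apply, filter_le_eq_Ici, sum_Ici_decrement,
    of_apply]

theorem posDef_of_max_iff (g : Fin n → ℝ) :
    (of fun i j => g (max i j)).PosDef ↔ (∀ i, 0 < g i) ∧ StrictAnti g := by
  rw [of_max_eq_star_lowerOnes_mul_diagonal_mul_lowerOnes,
    IsUnit.posDef_star_left_conjugate_iff isUnit_lowerOnes, posDef_diagonal_iff,
    forall_decrement_pos_iff]

end MaxMatrix

theorem max_matrix_posDef_iff_general {P : Type*} {n : ℕ} (x : Fin n → P) (f : P → ℝ) :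
    (Matrix.of fun i j => f (x (max i j))).PosDef ↔
      (∀ i, 0 < f (x i)) ∧ StrictAnti fun i => f (x i) :=
  MaxMatrix.posDef_of_max_iff fun i => f (x i)

/-- **MAX matrix of a chain**: for a chain `x 0 ≺ x 1 ≺ ⋯` in a lattice `P`,
the matrix `(f (x (max i j)))` is positive definite iff
`0 < f (x (n-1)) < ⋯ < f (x 1) < f (x 0)`. -/
theorem max_matrix_posDef_iff {P : Type*} [Lattice P] {n : ℕ} (x : Fin n → P)
    (hchain : StrictMono x) (f : P → ℝ) :
    (Matrix.of fun i j => f (x (max i j))).PosDef ↔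
      (∀ i, 0 < f (x i)) ∧ StrictAnti fun i => f (x i) :=
  max_matrix_posDef_iff_general x f
end

section
/- For α > 0 and any finite set S = {x_1,...,x_n} of distinct positive integers, the power GCD matrix with (i,j) entry gcd(x_i, x_j)^α is positive definite. -/
/-!
With Jordan's totient `J_α = μ * (· ^ α)` one has `m ^ α = ∑_{d ∣ m} J_α d`, and `J_α` is
multiplicative with `J_α (p ^ (k+1)) = p ^ ((k+1) α) - p ^ (k α) > 0`. Hence the power GCD
matrix factors as `Bᵀ * diagonal J_α * B`, where `B d i = [d ∣ x i]` runs over the divisors `d`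
of the `x i`. This is positive definite because `B` has trivial kernel: if `v ≠ 0` and `x i₀` is
maximal among the `x i` with `v i ≠ 0`, then `(B v) (x i₀) = v i₀`, since `x` is injective.
-/

open scoped ArithmeticFunction.Moebius

namespace ArithmeticFunction

noncomputable def rpow (α : ℝ) : ArithmeticFunction ℝ :=
  ⟨fun n => if n = 0 then 0 else (n : ℝ) ^ α, if_pos rfl⟩

theorem rpow_apply {α : ℝ} {n : ℕ} (hn : n ≠ 0) : rpow α n = (n : ℝ) ^ α := if_neg hn

theorem isMultiplicative_rpow (α : ℝ) : (rpow α).IsMultiplicative := by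
  refine IsMultiplicative.iff_ne_zero.2 ⟨by simp [rpow_apply], fun {m n} hm hn _ => ?_⟩
  rw [rpow_apply (mul_ne_zero hm hn), rpow_apply hm, rpow_apply hn, Nat.cast_mul,
    Real.mul_rpow (Nat.cast_nonneg m) (Nat.cast_nonneg n)]

noncomputable def jordan (α : ℝ) : ArithmeticFunction ℝ := (μ : ArithmeticFunction ℝ) * rpow α

theorem sum_divisors_jordan (α : ℝ) {n : ℕ} (hn : n ≠ 0) :
    ∑ d ∈ n.divisors, jordan α d = (n : ℝ) ^ α := by
  rw [← coe_mul_zeta_apply, jordan, mul_right_comm, coe_moebius_mul_coe_zeta, one_mul,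
    rpow_apply hn]

theorem jordan_prime_pow_succ (α : ℝ) {p : ℕ} (hp : p.Prime) (k : ℕ) :
    jordan α (p ^ (k + 1)) = ((p : ℝ) ^ (k + 1)) ^ α - ((p : ℝ) ^ k) ^ α := by
  have hsum (j : ℕ) : ∑ i ∈ Finset.range (j + 1), jordan α (p ^ i) = ((p : ℝ) ^ j) ^ α := by
    rw [← Nat.sum_divisors_prime_pow hp, sum_divisors_jordan α (pow_ne_zero j hp.ne_zero),
      Nat.cast_pow]
  rw [← hsum, ← hsum, Finset.sum_range_succ, add_sub_cancel_left]

theorem jordan_pos {α : ℝ} (hα : 0 < α) {n : ℕ} (hn : n ≠ 0) : 0 < jordan α n := by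
  have hmul : (jordan α).IsMultiplicative :=
    isMultiplicative_moebius.intCast.mul (isMultiplicative_rpow α)
  rw [IsMultiplicative.multiplicative_factorization _ hmul hn]
  refine Finset.prod_pos fun p hp => ?_
  have hp' : p.Prime := Nat.prime_of_mem_primeFactors (Nat.support_factorization n ▸ hp)
  obtain ⟨k, hk⟩ := Nat.exists_eq_add_one_of_ne_zero (Finsupp.mem_support_iff.mp hp)
  dsimp only
  rw [hk, jordan_prime_pow_succ α hp', sub_pos]
  gcongr
  · exact_mod_cast hp'.one_lt
  · exact k.lt_add_one

end ArithmeticFunction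

namespace Matrix

variable {ι : Type*}

def divisibilityMatrix (S : Finset ℕ) (x : ι → ℕ) : Matrix S ι ℝ :=
  of fun d i => if (d : ℕ) ∣ x i then 1 else 0

theorem divisibilityMatrix_mulVec_apply [Fintype ι] (S : Finset ℕ) (x : ι → ℕ) (v : ι → ℝ)
    (d : S) : (divisibilityMatrix S x *ᵥ v) d = ∑ i with (d : ℕ) ∣ x i, v i := by
  simp [divisibilityMatrix, mulVec, dotProduct, Finset.sum_filter]

theorem injective_mulVec_divisibilityMatrix [Fintype ι] {S : Finset ℕ} {x : ι → ℕ}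
    (hpos : ∀ i, 0 < x i) (hinj : Function.Injective x) (hS : ∀ i, x i ∈ S) :
    Function.Injective (divisibilityMatrix S x).mulVec := by
  classical
  refine (injective_iff_map_eq_zero (mulVecLin (divisibilityMatrix S x))).2 fun v hv => ?_
  by_contra hv_ne
  obtain ⟨i₀, hi₀, hmax⟩ := Finset.exists_max_image {i | v i ≠ 0} x
    (by simpa [Finset.filter_nonempty_iff, Function.ne_iff] using hv_ne)
  have hsum : ∑ i with x i₀ ∣ x i, v i = v i₀ := by
    refine Finset.sum_eq_single_of_mem i₀ (by simp) fun i hi hne => ?_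
    by_contra hvi
    have hle : x i ≤ x i₀ := hmax i (by simpa using hvi)
    exact hne (hinj (hle.antisymm (Nat.le_of_dvd (hpos i) (by simpa using hi))))
  have h := congrFun hv ⟨x i₀, hS i₀⟩
  rw [mulVecLin_apply, divisibilityMatrix_mulVec_apply, hsum] at h
  exact (by simpa using hi₀ : v i₀ ≠ 0) h

theorem divisibilityMatrix_transpose_mul_diagonal_mul {S : Finset ℕ} {x : ι → ℕ}
    (hpos : ∀ i, 0 < x i) (hS : ∀ i, (x i).divisors ⊆ S) (f : ℕ → ℝ) :
    (divisibilityMatrix S x)ᵀ * diagonal (fun d : S => f d) * divisibilityMatrix S x =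
      of fun i j => ∑ d ∈ (Nat.gcd (x i) (x j)).divisors, f d := by
  ext i j
  have hgcd : (Nat.gcd (x i) (x j)).divisors = {d ∈ S | d ∣ Nat.gcd (x i) (x j)} := by
    ext d
    simp only [Nat.mem_divisors, Finset.mem_filter]
    refine ⟨fun ⟨hd, _⟩ => ⟨hS i ?_, hd⟩, fun ⟨_, hd⟩ => ⟨hd, ?_⟩⟩
    · exact Nat.mem_divisors.2 ⟨hd.trans (Nat.gcd_dvd_left _ _), (hpos i).ne'⟩
    · exact (Nat.gcd_pos_of_pos_left _ (hpos i)).ne'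
  rw [of_apply, hgcd, Finset.sum_filter, ← Finset.sum_coe_sort S, mul_apply]
  refine Finset.sum_congr rfl fun d _ => ?_
  simp only [mul_diagonal, transpose_apply, divisibilityMatrix, of_apply, Nat.dvd_gcd_iff]
  split_ifs <;> simp_all

theorem posDef_sum_divisors_gcd [Fintype ι] {x : ι → ℕ} (hpos : ∀ i, 0 < x i)
    (hinj : Function.Injective x) {f : ℕ → ℝ} (hf : ∀ d, 0 < d → 0 < f d) :
    (of fun i j => ∑ d ∈ (Nat.gcd (x i) (x j)).divisors, f d).PosDef := by
  classical
  set S := Finset.univ.biUnion fun i => (x i).divisors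
  have hS (i : ι) : (x i).divisors ⊆ S :=
    Finset.subset_biUnion_of_mem (fun i => (x i).divisors) (Finset.mem_univ i)
  have hfS (d : S) : 0 < f d := by
    obtain ⟨i, -, hd⟩ := Finset.mem_biUnion.1 d.2
    exact hf d (Nat.pos_of_mem_divisors hd)
  rw [← divisibilityMatrix_transpose_mul_diagonal_mul hpos hS f,
    ← conjTranspose_eq_transpose_of_trivial]
  exact (PosDef.diagonal hfS).conjTranspose_mul_mul_same
    (injective_mulVec_divisibilityMatrix hpos hinj fun i ↦
      hS i (Nat.mem_divisors_self _ (hpos i).ne'))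

end Matrix

/-- **Power GCD matrices are positive definite**: for `α > 0` and distinct
positive integers `x 0, …, x (n-1)`, the matrix `(gcd (x i) (x j) ^ α)` is
positive definite. -/
theorem power_gcd_matrix_posDef {n : ℕ} (x : Fin n → ℕ)
    (hpos : ∀ i, 0 < x i) (hinj : Function.Injective x)
    {α : ℝ} (hα : 0 < α) :
    (Matrix.of fun i j => (Nat.gcd (x i) (x j) : ℝ) ^ α).PosDef := by
  have hentry (i j : Fin n) : (Nat.gcd (x i) (x j) : ℝ) ^ α =
      ∑ d ∈ (Nat.gcd (x i) (x j)).divisors, ArithmeticFunction.jordan α d :=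
    (ArithmeticFunction.sum_divisors_jordan α (Nat.gcd_pos_of_pos_left _ (hpos i)).ne').symm
  simp_rw [hentry]
  exact Matrix.posDef_sum_divisors_gcd hpos hinj fun d hd ↦ ArithmeticFunction.jordan_pos hα hd.ne'
end

section
/- Let S be a finite subset of a lattice P and let M = meetcl(S) be the meet-subsemilattice generated by S. The following are equivalent: (1) every element of M covers at most one element of M; (2) for every x ∈ M, the set {y ∈ M : y ≼ x} is a chain; (3) for all x, y, z ∈ M with x ≼ z and y ≼ z, either x ≼ y or y ≼ x. -/
/-!
Two distinct lower covers of an element can never be comparable, so comparability below a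
common upper bound forces lower covers to be unique. Conversely, in a finite poset every
`a < x` lies below some lower cover of `x`; if that cover is unique, any two elements
strictly below `x` lie below it, and well-founded induction applies.
-/

/-- The meet-closure of a set `S` in a lattice: the smallest subset containing `S`
that is closed under binary meets. -/
def meetClosure {P : Type*} [Lattice P] (S : Set P) : Set P :=
  ⋂₀ {T : Set P | S ⊆ T ∧ ∀ a ∈ T, ∀ b ∈ T, a ⊓ b ∈ T}

theorem meetClosure_eq_infClosure {P : Type*} [Lattice P] (S : Set P) :
    meetClosure S = infClosure S :=
  le_antisymm
    (Set.sInter_subset_of_mem ⟨subset_infClosure, fun _ ha _ hb => infClosed_infClosure ha hb⟩)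
    (infClosure_min (Set.subset_sInter fun _ hT => hT.1)
      fun _ ha _ hb => Set.mem_sInter.2 fun T hT => hT.2 _ (ha T hT) _ (hb T hT))

protected theorem Set.Finite.meetClosure {P : Type*} [Lattice P] {S : Set P} (hS : S.Finite) :
    (meetClosure S).Finite :=
  meetClosure_eq_infClosure S ▸ hS.infClosure

section CovBy

variable {α : Type*} [PartialOrder α]

theorem IsChain.subsingleton_setOf_covBy {c : α} (h : IsChain (· ≤ ·) (Set.Iic c)) :
    {b | b ⋖ c}.Subsingleton := by
  intro a (ha : a ⋖ c) b (hb : b ⋖ c)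
  by_contra hne
  rcases h ha.le hb.le hne with hab | hba
  · exact ha.2 (hab.lt_of_ne hne) hb.lt
  · exact hb.2 (hba.lt_of_ne' hne) ha.lt

theorem isChain_Iic_of_subsingleton_setOf_covBy [WellFoundedLT α] [IsStronglyCoatomic α]
    (h : ∀ c : α, {b | b ⋖ c}.Subsingleton) (c : α) : IsChain (· ≤ ·) (Set.Iic c) := by
  induction c using WellFoundedLT.induction with
  | _ c ih =>
    intro a (hac : a ≤ c) b (hbc : b ≤ c) hne
    rcases hac.eq_or_lt with rfl | hac
    · exact Or.inr hbc
    rcases hbc.eq_or_lt with rfl | hbc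
    · exact Or.inl hac.le
    obtain ⟨a', haa', ha'c⟩ := exists_le_covBy_of_lt hac
    obtain ⟨b', hbb', hb'c⟩ := exists_le_covBy_of_lt hbc
    obtain rfl : a' = b' := h c ha'c hb'c
    exact ih a' ha'c.lt haa' hbb' hne

end CovBy

/-- For a finite set `S` in a lattice with meet-closure `M`, the following are
equivalent: (1) every element of `M` covers at most one element of `M`;
(2) for every `x ∈ M` the set `{y ∈ M | y ≼ x}` is a chain;
(3) any two elements of `M` lying below a common element of `M` are comparable. -/
theorem wedge_tree_tfae {P : Type*} [Lattice P] (S : Set P) (hS : S.Finite) :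
    List.TFAE
      [∀ a : meetClosure S, {b : meetClosure S | b ⋖ a}.Subsingleton,
       ∀ a ∈ meetClosure S, IsChain (· ≤ ·) {y ∈ meetClosure S | y ≤ a},
       ∀ a ∈ meetClosure S, ∀ b ∈ meetClosure S, ∀ c ∈ meetClosure S,
         a ≤ c → b ≤ c → a ≤ b ∨ b ≤ a] := by
  have : Finite (meetClosure S) := hS.meetClosure.to_subtype
  tfae_have 1 → 3 := fun h a ha b hb c hc hac hbc =>
    (isChain_Iic_of_subsingleton_setOf_covBy h ⟨c, hc⟩).total
      (x := ⟨a, ha⟩) (y := ⟨b, hb⟩) hac hbc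
  tfae_have 3 → 1 := fun h c =>
    IsChain.subsingleton_setOf_covBy fun a hac b hbc _ => h a a.2 b b.2 c c.2 hac hbc
  tfae_have 2 → 3 := by
    intro h a ha b hb c hc hac hbc
    rcases eq_or_ne a b with rfl | hne
    · exact Or.inl le_rfl
    · exact h c hc ⟨ha, hac⟩ ⟨hb, hbc⟩ hne
  tfae_have 3 → 2 := fun h c hc a ha b hb _ => h a ha.1 b hb.1 c hc ha.2 hb.2
  tfae_finish
end

section
/- Let S = {x_1,...,x_n} be a finite subset of a lattice with x_1 = min S, such that S is meet closed and the Hasse diagram of S is a tree (every element of S covers at most one element of S). If the meet matrix (f(x_i ∧ x_j))_{i,j=1}^n is positive definite, then f is strictly order-preserving on S (x_i ≺ x_j implies f(x_i) < f(x_j)) and f(x_i) > 0 for all i. -/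
/-!
Both conclusions come from evaluating the quadratic form of the meet matrix at simple vectors:
at `e i` it gives `f (x i) > 0`, and at `e i - e j` with `x i < x j` it gives
`f (x j) - f (x i) > 0`, because three of the four entries involved equal `f (x i)`.
-/

namespace Matrix.PosDef

variable {n R : Type*} [Fintype n] [Ring R] [PartialOrder R] [StarRing R] [Nontrivial R]

lemma add_sub_sub_pos {A : Matrix n n R} (hA : A.PosDef) {i j : n} (hij : i ≠ j) :
    0 < A i i + A j j - A i j - A j i := by
  classical
  have hv : (Pi.single i 1 - Pi.single j 1 : n → R) ≠ 0 := fun h => by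
    simpa [Pi.single_apply, hij] using congrFun h i
  have hstar : star (Pi.single i 1 - Pi.single j 1 : n → R) = Pi.single i 1 - Pi.single j 1 := by
    simp
  have := hA.dotProduct_mulVec_pos hv
  rw [hstar] at this
  simp only [mulVec_sub, mulVec_single, MulOpposite.op_one, one_smul, dotProduct_sub,
    sub_dotProduct, single_dotProduct, col_apply, one_mul] at this
  convert this using 1
  abel

end Matrix.PosDef

theorem lt_of_meet_matrix_posDef {P ι : Type*} [SemilatticeInf P] [Fintype ι] {x : ι → P}
    {f : P → ℝ} (hA : (Matrix.of fun i j => f (x i ⊓ x j)).PosDef) {i j : ι} (hij : x i < x j) :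
    f (x i) < f (x j) := by
  have hne : i ≠ j := by rintro rfl; exact hij.false
  have := hA.add_sub_sub_pos hne
  simp only [Matrix.of_apply, inf_idem, inf_eq_left.mpr hij.le, inf_eq_right.mpr hij.le] at this
  linarith

theorem strictMono_of_meet_matrix_posDef_general {P : Type*} [Lattice P] {n : ℕ}
    (x : Fin n → P) (f : P → ℝ)
    (hposdef : (Matrix.of fun i j => f (x i ⊓ x j)).PosDef) :
    (∀ i j, x i < x j → f (x i) < f (x j)) ∧ ∀ i, 0 < f (x i) :=
  ⟨fun _ _ => lt_of_meet_matrix_posDef hposdef, fun _ => by simpa using hposdef.diag_pos⟩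

/-- If `S = {x 0, …, x (n-1)}` is meet closed with minimum `x 0`, indexed compatibly
with the order, and the Hasse diagram of `S` is a tree (every element covers at most
one element of `S`), then positive definiteness of the meet matrix `(f (x i ⊓ x j))`
forces `f` to be strictly order-preserving and positive on `S`. -/
theorem strictMono_of_meet_matrix_posDef {P : Type*} [Lattice P] {n : ℕ} (hn : 0 < n)
    (x : Fin n → P) (f : P → ℝ)
    (hinj : Function.Injective x)
    (hord : ∀ i j, x i ≤ x j → i ≤ j)
    (hmeet : ∀ i j, ∃ k, x k = x i ⊓ x j)
    (hmin : ∀ i, x ⟨0, hn⟩ ≤ x i)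
    (htree : ∀ a : Set.range x, {b : Set.range x | b ⋖ a}.Subsingleton)
    (hposdef : (Matrix.of fun i j => f (x i ⊓ x j)).PosDef) :
    (∀ i j, x i < x j → f (x i) < f (x j)) ∧ ∀ i, 0 < f (x i) :=
  strictMono_of_meet_matrix_posDef_general x f hposdef
end

section
/- Let P be a lattice, f : P → ℝ nonnegative and order-preserving on the meet-closure of S = {x_1,...,x_n}, with f(x_1) ≤ f(x_2) ≤ ⋯ ≤ f(x_n). For 1 ≤ k ≤ n, let y ∈ ℂ^n have y_{k+1} = ⋯ = y_n = 0. Then y* (S_n)_f y ≤ k (y* y) f(x_k), where (S_n)_f is the matrix with entries f(x_i ∧ x_j). -/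
/-! If `y` is supported on `s` and the entries of `A` on `s × s` have norm at most `M`, then
`|y* A y| ≤ M (∑ |yᵢ|)² ≤ M · #s · y* y` by the triangle and Cauchy–Schwarz inequalities.
For a meet matrix `(f (xᵢ ⊓ xⱼ))` and `s = {1, …, k}`, monotonicity of `f` on the meet-closure
and along the indexing gives `0 ≤ f (xᵢ ⊓ xⱼ) ≤ f xᵢ ≤ f xₖ` for `i ≤ k`, and the quadratic form is real because the matrix is symmetric. -/

open Matrix
open scoped ComplexOrder

theorem subset_meetClosure {P : Type*} [Lattice P] (S : Set P) : S ⊆ meetClosure S :=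
  fun _ ha => Set.mem_sInter.mpr fun _ hT => hT.1 ha

theorem inf_mem_meetClosure {P : Type*} [Lattice P] {S : Set P} {a b : P}
    (ha : a ∈ meetClosure S) (hb : b ∈ meetClosure S) : a ⊓ b ∈ meetClosure S :=
  Set.mem_sInter.mpr fun T hT =>
    hT.2 _ (Set.mem_sInter.mp ha T hT) _ (Set.mem_sInter.mp hb T hT)

section

variable {ι 𝕜 : Type*} [Fintype ι] [RCLike 𝕜]

open Finset in
theorem sq_sum_le_card_mul_sum_sq_of_support_subset {u : ι → ℝ} {s : Finset ι}
    (hu : ∀ i ∉ s, u i = 0) : (∑ i, u i) ^ 2 ≤ #s * ∑ i, u i ^ 2 := by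
  have hsub : ∀ g : ι → ℝ, (∀ i ∉ s, g i = 0) → ∑ i ∈ s, g i = ∑ i, g i := fun g hg =>
    sum_subset (subset_univ s) fun i _ hi => hg i hi
  rw [← hsub u hu, ← hsub (u · ^ 2) fun i hi => by simp [hu i hi]]
  exact sq_sum_le_card_mul_sum_sq

theorem norm_star_dotProduct_mulVec_le (A : Matrix ι ι 𝕜) {y : ι → 𝕜} {s : Finset ι}
    (hy : ∀ i ∉ s, y i = 0) {M : ℝ} (hA : ∀ i ∈ s, ∀ j ∈ s, ‖A i j‖ ≤ M) :
    ‖star y ⬝ᵥ A *ᵥ y‖ ≤ M * (∑ i, ‖y i‖) ^ 2 := by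
  have hterm : ∀ i j, ‖star (y i) * (A i j * y j)‖ ≤ ‖y i‖ * (M * ‖y j‖) := by
    intro i j
    by_cases hi : i ∈ s
    · by_cases hj : j ∈ s
      · rw [norm_mul, norm_mul, norm_star]
        gcongr
        exact hA i hi j hj
      · simp [hy j hj]
    · simp [hy i hi]
  calc ‖star y ⬝ᵥ A *ᵥ y‖ = ‖∑ i, ∑ j, star (y i) * (A i j * y j)‖ := by
        simp only [dotProduct, mulVec, Pi.star_apply, Finset.mul_sum]
    _ ≤ ∑ i, ∑ j, ‖y i‖ * (M * ‖y j‖) :=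
        (norm_sum_le _ _).trans <| Finset.sum_le_sum fun i _ =>
          (norm_sum_le _ _).trans <| Finset.sum_le_sum fun j _ => hterm i j
    _ = M * (∑ i, ‖y i‖) ^ 2 := by
        simp only [← Finset.mul_sum, ← Finset.sum_mul]
        ring

theorem star_dotProduct_self_eq_sum_norm_sq (y : ι → 𝕜) :
    star y ⬝ᵥ y = ((∑ i, ‖y i‖ ^ 2 : ℝ) : 𝕜) := by
  simp [dotProduct, RCLike.conj_mul]

theorem Matrix.IsHermitian.star_dotProduct_mulVec_le {A : Matrix ι ι 𝕜} (hA : A.IsHermitian)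
    {y : ι → 𝕜} {s : Finset ι} (hy : ∀ i ∉ s, y i = 0) {M : ℝ} (hM : 0 ≤ M)
    (hAM : ∀ i ∈ s, ∀ j ∈ s, ‖A i j‖ ≤ M) :
    star y ⬝ᵥ A *ᵥ y ≤ (s.card : 𝕜) * (star y ⬝ᵥ y) * (M : 𝕜) := by
  have hbound : RCLike.re (star y ⬝ᵥ A *ᵥ y) ≤ s.card * (∑ i, ‖y i‖ ^ 2) * M :=
    calc RCLike.re (star y ⬝ᵥ A *ᵥ y) ≤ ‖star y ⬝ᵥ A *ᵥ y‖ := RCLike.re_le_norm _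
      _ ≤ M * (∑ i, ‖y i‖) ^ 2 := norm_star_dotProduct_mulVec_le A hy hAM
      _ ≤ M * (s.card * ∑ i, ‖y i‖ ^ 2) := by
          gcongr
          exact sq_sum_le_card_mul_sum_sq_of_support_subset fun i hi => by simp [hy i hi]
      _ = s.card * (∑ i, ‖y i‖ ^ 2) * M := by ring
  have hreal : (s.card : 𝕜) * ((∑ i, ‖y i‖ ^ 2 : ℝ) : 𝕜) * (M : 𝕜) =
      ((s.card * (∑ i, ‖y i‖ ^ 2) * M : ℝ) : 𝕜) := by
    push_cast
    ring
  rw [star_dotProduct_self_eq_sum_norm_sq, hreal, RCLike.le_iff_re_im,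
    hA.im_star_dotProduct_mulVec_self, RCLike.ofReal_re, RCLike.ofReal_im]
  exact ⟨hbound, rfl⟩

end

/-- **Quadratic form bound for meet matrices**: if `f` is nonnegative,
order-preserving on the meet-closure of `S`, increasing along the indexing, and
`y ∈ ℂⁿ` vanishes in coordinates beyond `k` (1-indexed `k+1, …, n`), then
`y* (S_n)_f y ≤ (k+1) (y* y) f (x k)` (with `k` 0-indexed, so `k+1` is the
1-indexed position). -/
theorem meet_matrix_quadratic_form_bound {P : Type*} [Lattice P] {n : ℕ}
    (x : Fin n → P) (f : P → ℝ)
    (hf_nonneg : ∀ a, 0 ≤ f a)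
    (hf_mono : ∀ a ∈ meetClosure (Set.range x), ∀ b ∈ meetClosure (Set.range x),
      a ≤ b → f a ≤ f b)
    (hinc : ∀ i j : Fin n, i ≤ j → f (x i) ≤ f (x j))
    (k : Fin n) (y : Fin n → ℂ) (hy : ∀ i, k < i → y i = 0) :
    star y ⬝ᵥ (Matrix.of fun i j => (f (x i ⊓ x j) : ℂ)).mulVec y ≤
      (k.1 + 1 : ℂ) * (star y ⬝ᵥ y) * (f (x k) : ℂ) := by
  have hx : ∀ i, x i ∈ meetClosure (Set.range x) := fun i =>
    subset_meetClosure _ (Set.mem_range_self i)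
  have hherm : (Matrix.of fun i j => (f (x i ⊓ x j) : ℂ)).IsHermitian :=
    IsHermitian.ext fun i j => by simp [inf_comm]
  have hentry : ∀ i ∈ Finset.Iic k, ∀ j ∈ Finset.Iic k, ‖(f (x i ⊓ x j) : ℂ)‖ ≤ f (x k) :=
    fun i hi j _ => by
      rw [Complex.norm_of_nonneg (hf_nonneg _)]
      exact (hf_mono _ (inf_mem_meetClosure (hx i) (hx j)) _ (hx i) inf_le_left).trans
        (hinc i k (Finset.mem_Iic.mp hi))
  have hsupp : ∀ i ∉ Finset.Iic k, y i = 0 := fun i hi =>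
    hy i (lt_of_not_ge (Finset.mem_Iic.not.mp hi))
  simpa [Fin.card_Iic] using hherm.star_dotProduct_mulVec_le hsupp (hf_nonneg _) hentry
end

section
/- Let P be a lattice, f : P → ℝ nonnegative and order-reversing on the join-closure of S = {x_1,...,x_n}, with f(x_1) ≥ f(x_2) ≥ ⋯ ≥ f(x_n). If λ̂_1 ≤ λ̂_2 ≤ ⋯ ≤ λ̂_n are the eigenvalues of the join matrix (f(x_i ∨ x_j))_{i,j=1}^n, then λ̂_k ≤ k f(x_{n−k+1}) for all k = 1,...,n, and f(x_1) ≤ λ̂_n. -/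
/-!
The join matrix `A = (f (xᵢ ⊔ xⱼ))` is symmetric, and since `xᵢ ≤ xᵢ ⊔ xⱼ` inside the join-closure,
`0 ≤ A i j ≤ f (xᵢ)`. On the last `k` coordinates every entry is at most `f (x_{n-k+1})`, so by
termwise AM-GM the Rayleigh quotient of a vector supported there is at most `k f (x_{n-k+1})`.
The subspace of such vectors has dimension `k`, so by the Courant–Fischer min-max principle it
contains a nonzero vector whose Rayleigh quotient is at least `λ̂_k`. Finally
`f (x₁) = ⟪e₁, A e₁⟫` is a Rayleigh quotient, hence at most `λ̂_n`.
-/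

/-- The join-closure of a set `S` in a lattice. -/
def joinClosure {P : Type*} [Lattice P] (S : Set P) : Set P :=
  ⋂₀ {T : Set P | S ⊆ T ∧ ∀ a ∈ T, ∀ b ∈ T, a ⊔ b ∈ T}

open Finset Matrix Polynomial

section JoinClosure

variable {P : Type*} [Lattice P] {S : Set P}

theorem subset_joinClosure : S ⊆ joinClosure S :=
  fun _ ha => Set.mem_sInter.2 fun _ hT => hT.1 ha

theorem sup_mem_joinClosure {a b : P} (ha : a ∈ joinClosure S) (hb : b ∈ joinClosure S) :
    a ⊔ b ∈ joinClosure S :=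
  Set.mem_sInter.2 fun T hT => hT.2 a (Set.mem_sInter.1 ha T hT) b (Set.mem_sInter.1 hb T hT)

end JoinClosure

namespace Matrix

variable {ι : Type*} [Fintype ι]

theorem dotProduct_mulVec_conj_diagonal [DecidableEq ι] (U : Matrix ι ι ℝ) (d v : ι → ℝ) :
    v ⬝ᵥ (U * diagonal d * Uᵀ) *ᵥ v = ∑ i, d i * (Uᵀ *ᵥ v) i ^ 2 := by
  rw [← mulVec_mulVec, ← mulVec_mulVec, dotProduct_mulVec, ← mulVec_transpose, dotProduct]
  simp only [mulVec_diagonal]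
  exact sum_congr rfl fun i _ => by ring

theorem dotProduct_mulVec_le_card_mul {A : Matrix ι ι ℝ} {s : Finset ι} {c : ℝ}
    (hA : ∀ i ∈ s, ∀ j ∈ s, |A i j| ≤ c) {v : ι → ℝ} (hv : ∀ i ∉ s, v i = 0) :
    v ⬝ᵥ A *ᵥ v ≤ #s * c * (v ⬝ᵥ v) := by
  have hrestrict : ∀ g : ι → ℝ, (∀ i ∉ s, g i = 0) → ∑ i, g i = ∑ i ∈ s, g i := fun g hg =>
    (sum_subset (subset_univ s) fun i _ hi => hg i hi).symm
  have hterm : ∀ i ∈ s, ∀ j ∈ s, v i * (A i j * v j) ≤ c * (v i ^ 2 + v j ^ 2) / 2 := by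
    intro i hi j hj
    calc v i * (A i j * v j) ≤ |A i j| * (v i ^ 2 + v j ^ 2) / 2 := by
          nlinarith [abs_nonneg (A i j), neg_abs_le (A i j), le_abs_self (A i j),
            sq_nonneg (v i - v j), sq_nonneg (v i + v j)]
      _ ≤ c * (v i ^ 2 + v j ^ 2) / 2 := by gcongr; exact hA i hi j hj
  calc v ⬝ᵥ A *ᵥ v = ∑ i ∈ s, ∑ j ∈ s, v i * (A i j * v j) := by
        simp only [dotProduct, mulVec]
        rw [hrestrict _ fun i hi => by simp [hv i hi]]
        refine sum_congr rfl fun i _ => ?_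
        rw [hrestrict _ fun j hj => by simp [hv j hj], mul_sum]
    _ ≤ ∑ i ∈ s, ∑ j ∈ s, c * (v i ^ 2 + v j ^ 2) / 2 :=
        sum_le_sum fun i hi => sum_le_sum fun j hj => hterm i hi j hj
    _ = #s * c * (v ⬝ᵥ v) := by
        rw [dotProduct, hrestrict _ fun i hi => by simp [hv i hi]]
        simp only [sq, mul_add, add_div, sum_add_distrib, sum_const, nsmul_eq_mul, ← sum_div,
          ← mul_sum]
        ring

namespace IsHermitian

variable [DecidableEq ι] {A : Matrix ι ι ℝ} (hA : A.IsHermitian)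

theorem dotProduct_mulVec_eq_sum_eigenvalues (v : ι → ℝ) :
    v ⬝ᵥ A *ᵥ v =
      ∑ i, hA.eigenvalues i * ((hA.eigenvectorUnitary : Matrix ι ι ℝ)ᵀ *ᵥ v) i ^ 2 := by
  conv_lhs => rw [hA.spectral_theorem]
  simpa [Unitary.conjStarAlgAut_apply, star_eq_conjTranspose,
    conjTranspose_eq_transpose_of_trivial] using dotProduct_mulVec_conj_diagonal _ _ v

theorem dotProduct_self_eq_sum_sq (v : ι → ℝ) :
    v ⬝ᵥ v = ∑ i, ((hA.eigenvectorUnitary : Matrix ι ι ℝ)ᵀ *ᵥ v) i ^ 2 := by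
  have hU :
      (hA.eigenvectorUnitary : Matrix ι ι ℝ) * (hA.eigenvectorUnitary : Matrix ι ι ℝ)ᵀ = 1 := by
    simpa [star_eq_conjTranspose, conjTranspose_eq_transpose_of_trivial] using
      Unitary.coe_mul_star_self hA.eigenvectorUnitary
  simpa [hU] using dotProduct_mulVec_conj_diagonal (hA.eigenvectorUnitary : Matrix ι ι ℝ) 1 v

theorem dotProduct_mulVec_le_mul {M : ℝ} (hM : ∀ i, hA.eigenvalues i ≤ M) (v : ι → ℝ) :
    v ⬝ᵥ A *ᵥ v ≤ M * (v ⬝ᵥ v) := by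
  rw [hA.dotProduct_mulVec_eq_sum_eigenvalues, hA.dotProduct_self_eq_sum_sq, mul_sum]
  gcongr with i
  exact hM i

-- The easy half of the Courant–Fischer min-max principle.
theorem exists_ne_zero_mem_mul_le_dotProduct_mulVec (μ : ℝ) (W : Submodule ℝ (ι → ℝ))
    (hW : #{i | hA.eigenvalues i < μ} < Module.finrank ℝ W) :
    ∃ v ∈ W, v ≠ 0 ∧ μ * (v ⬝ᵥ v) ≤ v ⬝ᵥ A *ᵥ v := by
  let U := (hA.eigenvectorUnitary : Matrix ι ι ℝ)
  let F : W →ₗ[ℝ] ({i // hA.eigenvalues i < μ} → ℝ) :=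
    LinearMap.funLeft ℝ ℝ Subtype.val ∘ₗ Uᵀ.mulVecLin ∘ₗ W.subtype
  have hker : LinearMap.ker F ≠ ⊥ := LinearMap.ker_ne_bot_of_finrank_lt (by
    simpa [Module.finrank_fintype_fun_eq_card, Fintype.card_subtype] using hW)
  obtain ⟨w, hwF, hw0⟩ := Submodule.exists_mem_ne_zero_of_ne_bot hker
  have hcoord : ∀ i, hA.eigenvalues i < μ → (Uᵀ *ᵥ (w : ι → ℝ)) i = 0 := fun i hi =>
    congrFun (LinearMap.mem_ker.1 hwF) ⟨i, hi⟩
  refine ⟨w, w.2, by simpa using hw0, ?_⟩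
  rw [hA.dotProduct_mulVec_eq_sum_eigenvalues, hA.dotProduct_self_eq_sum_sq, mul_sum]
  refine sum_le_sum fun i _ => ?_
  by_cases hi : hA.eigenvalues i < μ
  · rw [hcoord i hi]; simp
  · exact mul_le_mul_of_nonneg_right (not_lt.1 hi) (sq_nonneg _)

theorem card_filter_eigenvalues_eq {lam : ι → ℝ} (hlam : A.charpoly = ∏ i, (X - C (lam i)))
    (p : ℝ → Prop) [DecidablePred p] :
    #{i | p (hA.eigenvalues i)} = #{i | p (lam i)} := by
  have hroots := hA.roots_charpoly_eq_eigenvalues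
  rw [hlam, roots_prod _ _ (prod_ne_zero_iff.2 fun i _ => X_sub_C_ne_zero _)] at hroots
  simp only [roots_X_sub_C, Multiset.bind_singleton, RCLike.ofReal_real_eq_id,
    Function.comp_apply, id_eq] at hroots
  rw [card_def, card_def, filter_val, filter_val]
  simpa [Multiset.filter_map] using congrArg (fun m => Multiset.card (m.filter p)) hroots.symm

end IsHermitian

theorem IsHermitian.diag_le_of_charpoly_eq [DecidableEq ι] {A : Matrix ι ι ℝ}
    (hA : A.IsHermitian) {lam : ι → ℝ} (hlam : A.charpoly = ∏ i, (X - C (lam i)))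
    {M : ℝ} (hM : ∀ i, lam i ≤ M) (i : ι) : A i i ≤ M := by
  have heig : ∀ j, hA.eigenvalues j ≤ M := by
    have hnone : #{j | M < hA.eigenvalues j} = 0 := by
      rw [hA.card_filter_eigenvalues_eq hlam, card_eq_zero, filter_eq_empty_iff]
      exact fun j _ => not_lt.2 (hM j)
    simpa [filter_eq_empty_iff] using hnone
  simpa using hA.dotProduct_mulVec_le_mul heig (Pi.single i 1)

theorem IsHermitian.le_card_mul_of_charpoly_eq {n : ℕ} {A : Matrix (Fin n) (Fin n) ℝ}
    (hA : A.IsHermitian) {lam : Fin n → ℝ} (hmono : Monotone lam)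
    (hlam : A.charpoly = ∏ i, (X - C (lam i))) {k : Fin n} {s : Finset (Fin n)} (hks : k < #s)
    {c : ℝ} (hc : ∀ i ∈ s, ∀ j ∈ s, |A i j| ≤ c) : lam k ≤ #s * c := by
  have hcount :
      #{i | hA.eigenvalues i < lam k} < Module.finrank ℝ (Pi.spanSubset ℝ (s : Set (Fin n))) := by
    rw [Pi.dim_spanSubset, Set.ncard_coe_finset, hA.card_filter_eigenvalues_eq hlam (· < lam k)]
    calc #{i | lam i < lam k} ≤ #(Iio k) :=
          card_le_card fun i hi => mem_Iio.2 (hmono.reflect_lt (mem_filter.1 hi).2)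
      _ < #s := by rwa [Fin.card_Iio]
  obtain ⟨v, hvs, hv0, hlower⟩ := hA.exists_ne_zero_mem_mul_le_dotProduct_mulVec _ _ hcount
  have hupper := dotProduct_mulVec_le_card_mul hc (Pi.mem_spanSubset_iff.1 hvs)
  have hpos : 0 < v ⬝ᵥ v := by simpa using dotProduct_self_star_pos_iff.2 hv0
  exact le_of_mul_le_mul_right (hlower.trans hupper) hpos

end Matrix

-- `k` is 0-indexed: in the paper's notation the first conjunct reads `λ̂_{k+1} ≤ (k+1) f(x_{n-k})`.
/-- **Eigenvalue bounds for join matrices**: if `f` is nonnegative,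
order-reversing on the join-closure of `S`, decreasing along the indexing, and
`λ̂ 0 ≤ λ̂ 1 ≤ ⋯ ≤ λ̂ (n-1)` are the eigenvalues (with multiplicity) of the join
matrix `(f (x i ⊔ x j))`, then `λ̂ k ≤ (k+1) * f (x (n-1-k))` for each (0-indexed)
`k` (i.e. the 1-indexed bound `λ̂_k ≤ k f(x_{n-k+1})`), and `f (x 0) ≤ λ̂ (n-1)`. -/
theorem join_matrix_eigenvalue_bounds {P : Type*} [Lattice P] {n : ℕ} (hn : 0 < n)
    (x : Fin n → P) (f : P → ℝ)
    (hf_nonneg : ∀ a, 0 ≤ f a)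
    (hf_anti : ∀ a ∈ joinClosure (Set.range x), ∀ b ∈ joinClosure (Set.range x),
      a ≤ b → f b ≤ f a)
    (hdec : ∀ i j : Fin n, i ≤ j → f (x j) ≤ f (x i))
    (lam : Fin n → ℝ) (hlam_mono : Monotone lam)
    (hlam : (Matrix.of fun i j => f (x i ⊔ x j)).charpoly =
      ∏ i, (Polynomial.X - Polynomial.C (lam i))) :
    (∀ k : Fin n, lam k ≤ (k.1 + 1 : ℝ) * f (x k.rev)) ∧
      f (x ⟨0, hn⟩) ≤ lam ⟨n - 1, by omega⟩ := by
  set A : Matrix (Fin n) (Fin n) ℝ := Matrix.of fun i j => f (x i ⊔ x j)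
  have hA : A.IsHermitian := by
    ext i j
    simp [A, sup_comm]
  have hmem : ∀ i, x i ∈ joinClosure (Set.range x) := fun i => subset_joinClosure ⟨i, rfl⟩
  have hentry : ∀ i j, |A i j| ≤ f (x i) := fun i j => by
    show |f (x i ⊔ x j)| ≤ f (x i)
    rw [abs_of_nonneg (hf_nonneg _)]
    exact hf_anti _ (hmem i) _ (sup_mem_joinClosure (hmem i) (hmem j)) le_sup_left
  refine ⟨fun k => ?_, ?_⟩
  · have hcard : #(Ici k.rev) = k.1 + 1 := by simp; omega
    have := hA.le_card_mul_of_charpoly_eq hlam_mono hlam (k := k) (s := Ici k.rev) (by omega)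
      fun i hi j _ => (hentry i j).trans (hdec _ _ (mem_Ici.1 hi))
    rwa [hcard, Nat.cast_succ] at this
  · calc f (x ⟨0, hn⟩) = A ⟨0, hn⟩ ⟨0, hn⟩ := by simp [A]
      _ ≤ lam ⟨n - 1, by omega⟩ :=
        hA.diag_le_of_charpoly_eq hlam (fun j => hlam_mono (Fin.le_def.2 (by simp; omega))) _
end
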